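/- arXiv:1412.0716 — 2 statements merged into one kernel-verified Lean document; each statement's English description precedes it below -/
import Mathlib

section
/- If Z is a sequence in the unit disk with bounded density (every pseudohyperbolic disk of radius 1/2 contains at most N points of Z counting multiplicity), then Σ_{a∈Z} (1−|a|²)² < ∞. -/
open Metric

/-- The pseudohyperbolic metric `ψ(z,w) = |(z-w)/(1-w̄z)|`. -/
noncomputable def psh (z w : ℂ) : ℝ :=
  ‖(z - w) / (1 - (starRingEnd ℂ) w * z)‖

/-!
Around each `a ∈ Z` the Euclidean disk of radius `(1 - |a|²)/4` lies in the unit disk and inside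
the pseudohyperbolic disk of radius `1/2` about `a`. Bounded density therefore says that these
disks cover each point at most `N` times, so the sum of their areas `π (1 - |a|²)² / 16` is at
most `N` times the area of the unit disk.
-/

open MeasureTheory ENNReal

theorem tsum_measure_le_of_encard_le {α ι : Type*} [MeasurableSpace α] [Countable ι]
    (μ : Measure α) {S : ι → Set α} (hS : ∀ i, MeasurableSet (S i)) (N : ℕ)
    (hN : ∀ x ∈ ⋃ i, S i, {i | x ∈ S i}.encard ≤ N) :
    ∑' i, μ (S i) ≤ N * μ (⋃ i, S i) := by
  have hmult : ∀ x, ∑' i, (S i).indicator 1 x ≤ (⋃ i, S i).indicator (fun _ => (N : ℝ≥0∞)) x := by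
    intro x
    have hcount : ∑' i, (S i).indicator 1 x = ({i | x ∈ S i}.encard : ℝ≥0∞) := by
      rw [← tsum_set_one, tsum_subtype {i | x ∈ S i} (fun _ => (1 : ℝ≥0∞))]
      rfl
    by_cases hx : x ∈ ⋃ i, S i
    · rw [hcount, Set.indicator_of_mem hx]
      exact_mod_cast hN x hx
    · have hempty : {i | x ∈ S i} = ∅ := by
        ext i; simpa using fun h => hx (Set.mem_iUnion_of_mem i h)
      simp [hcount, hempty]
  calc ∑' i, μ (S i) = ∑' i, ∫⁻ x, (S i).indicator 1 x ∂μ :=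
        tsum_congr fun i => (lintegral_indicator_one (hS i)).symm
    _ = ∫⁻ x, ∑' i, (S i).indicator 1 x ∂μ :=
        (lintegral_tsum fun i => (measurable_one.indicator (hS i)).aemeasurable).symm
    _ ≤ ∫⁻ x, (⋃ i, S i).indicator (fun _ => (N : ℝ≥0∞)) x ∂μ := lintegral_mono hmult
    _ = N * μ (⋃ i, S i) := lintegral_indicator_const (MeasurableSet.iUnion hS) _

theorem summable_of_tsum_ofReal_ne_top {ι : Type*} {f : ι → ℝ} (hf : ∀ i, 0 ≤ f i)
    (h : ∑' i, ENNReal.ofReal (f i) ≠ ∞) : Summable f := by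
  simpa only [ENNReal.toReal_ofReal (hf _)] using ENNReal.summable_toReal h

theorem one_sub_sq_norm_pos {E : Type*} [SeminormedAddGroup E] {a : E} (ha : ‖a‖ < 1) :
    0 < 1 - ‖a‖ ^ 2 :=
  sub_pos.2 (pow_lt_one₀ (norm_nonneg a) ha two_ne_zero)

theorem sub_norm_sub_le_norm_one_sub_conj_mul {a : ℂ} (ha : ‖a‖ ≤ 1) (w : ℂ) :
    1 - ‖a‖ ^ 2 - ‖a - w‖ ≤ ‖1 - starRingEnd ℂ w * a‖ := by
  have hsplit :
      1 - starRingEnd ℂ w * a = (1 - starRingEnd ℂ a * a) + starRingEnd ℂ (a - w) * a := by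
    simp only [map_sub]; ring
  have hdiag : ‖1 - starRingEnd ℂ a * a‖ = 1 - ‖a‖ ^ 2 := by
    rw [mul_comm, Complex.mul_conj', ← Complex.ofReal_pow, ← Complex.ofReal_one,
      ← Complex.ofReal_sub, Complex.norm_real,
      Real.norm_of_nonneg (sub_nonneg.2 (pow_le_one₀ (norm_nonneg a) ha))]
  have hcross : ‖starRingEnd ℂ (a - w) * a‖ ≤ ‖a - w‖ := by
    rw [norm_mul, Complex.norm_conj]
    exact mul_le_of_le_one_right (norm_nonneg _) ha
  have := norm_sub_norm_le (1 - starRingEnd ℂ a * a) (-(starRingEnd ℂ (a - w) * a))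
  rw [sub_neg_eq_add, ← hsplit, norm_neg, hdiag] at this
  linarith

noncomputable def innerDisk (a : ℂ) : Set ℂ :=
  ball a ((1 - ‖a‖ ^ 2) / 4)

theorem innerDisk_subset_ball_zero_one {a : ℂ} (ha : ‖a‖ < 1) : innerDisk a ⊆ ball 0 1 :=
  ball_subset_ball' (by rw [dist_zero_right]; nlinarith [norm_nonneg a])

theorem psh_lt_half_of_mem_innerDisk {a w : ℂ} (ha : ‖a‖ < 1) (hw : w ∈ innerDisk a) :
    psh a w < 1 / 2 := by
  have hdist : ‖a - w‖ < (1 - ‖a‖ ^ 2) / 4 := by rwa [innerDisk, mem_ball', dist_eq_norm] at hw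
  have hden := sub_norm_sub_le_norm_one_sub_conj_mul ha.le w
  have hpos := one_sub_sq_norm_pos ha
  rw [psh, norm_div, div_lt_iff₀ (by linarith [norm_nonneg (a - w)])]
  linarith

theorem volume_innerDisk {a : ℂ} (ha : ‖a‖ < 1) :
    volume (innerDisk a) = ENNReal.ofReal (((1 - ‖a‖ ^ 2) / 4) ^ 2 * Real.pi) := by
  rw [innerDisk, Complex.volume_ball, ENNReal.ofReal_mul (sq_nonneg _),
    ENNReal.ofReal_pow (by linarith [one_sub_sq_norm_pos ha]),
    ← NNReal.coe_real_pi, ENNReal.ofReal_coe_nnreal]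

theorem stmt10 (Z : ℕ → ℂ) (hZ : ∀ n, Z n ∈ ball (0:ℂ) 1) (N : ℕ)
    (hden : ∀ w ∈ ball (0:ℂ) 1,
      {n : ℕ | psh (Z n) w < 1/2}.Finite ∧ {n : ℕ | psh (Z n) w < 1/2}.ncard ≤ N) :
    Summable (fun n => (1 - ‖Z n‖ ^ 2) ^ 2) := by
  have hZ' : ∀ n, ‖Z n‖ < 1 := fun n => mem_ball_zero_iff.mp (hZ n)
  have hcover : ⋃ n, innerDisk (Z n) ⊆ ball 0 1 :=
    Set.iUnion_subset fun n => innerDisk_subset_ball_zero_one (hZ' n)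
  have hoverlap : ∀ w ∈ ⋃ n, innerDisk (Z n), {n | w ∈ innerDisk (Z n)}.encard ≤ N := by
    intro w hw
    obtain ⟨hfin, hcard⟩ := hden w (hcover hw)
    calc {n | w ∈ innerDisk (Z n)}.encard ≤ {n | psh (Z n) w < 1 / 2}.encard :=
          Set.encard_le_encard fun n hn => psh_lt_half_of_mem_innerDisk (hZ' n) hn
      _ = {n | psh (Z n) w < 1 / 2}.ncard := hfin.cast_ncard_eq.symm
      _ ≤ N := by exact_mod_cast hcard
  have harea : ∑' n, volume (innerDisk (Z n)) ≠ ∞ := by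
    refine ne_top_of_le_ne_top ?_ (calc
      ∑' n, volume (innerDisk (Z n)) ≤ N * volume (⋃ n, innerDisk (Z n)) :=
        tsum_measure_le_of_encard_le volume (fun n => measurableSet_ball) N hoverlap
      _ ≤ N * volume (ball (0 : ℂ) 1) := by gcongr)
    simp [Complex.volume_ball, ENNReal.mul_eq_top]
  have hsum : Summable (fun n => ((1 - ‖Z n‖ ^ 2) / 4) ^ 2 * Real.pi) := by
    refine summable_of_tsum_ofReal_ne_top (fun n => by positivity) ?_
    simpa only [volume_innerDisk (hZ' _)] using harea
  exact (hsum.mul_left (16 / Real.pi)).congr fun n => by field_simp; ring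
end

section
/- Let Z be a sequence in the unit disk with Σ_{a∈Z}(1−|a|²)² < ∞ and with no points in D(0,δ) for some δ > 0 (and 0 ∉ Z). Then the product Ψ_Z(z) = Π_{a∈Z} ā·((a−z)/(1−āz))·exp(1 − ā·((a−z)/(1−āz))) converges uniformly on compact subsets of ID to an analytic function whose zero set is exactly Z with the given multiplicities, and |Ψ_Z(0)| = Π_{a∈Z} |a|²·e^{1−|a|²} > 0. -/
open Metric Filter

/-- One factor of the product `Ψ_Z`: `ā·M_a(z)·exp(1 - ā·M_a(z))` with
`M_a(z) = (a-z)/(1-āz)`. -/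
noncomputable def psifac (a z : ℂ) : ℂ :=
  (starRingEnd ℂ) a * ((a - z) / (1 - (starRingEnd ℂ) a * z)) *
    Complex.exp (1 - (starRingEnd ℂ) a * ((a - z) / (1 - (starRingEnd ℂ) a * z)))

/-!
With `w = (1 - |a|²) / (1 - āz)` one has `ā·M_a(z) = 1 - w`, so each factor is the Weierstrass
elementary factor `(1 - w)·e^w`, and `|(1 - w)·e^w - 1| ≤ 3|w|²` once `|w| ≤ 1`. On `|z| ≤ r < 1`
we have `|w| ≤ (1 - |a|²)/(1 - r)`, so eventually the factors lie within `3(1 - |a|²)²/(1 - r)²`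
of `1`, uniformly in `z`, and the product converges uniformly on compact sets to a holomorphic
function. An infinite product of nonzero factors whose distances to `1` are summable does not
vanish, which gives the zero set; at `z = 0` each factor is the positive real `|a|²·e^{1 - |a|²}`.
-/

open Complex ComplexConjugate

theorem norm_one_sub_mul_exp_sub_one_le {w : ℂ} (hw : ‖w‖ ≤ 1) :
    ‖(1 - w) * exp w - 1‖ ≤ 3 * ‖w‖ ^ 2 :=
  calc ‖(1 - w) * exp w - 1‖ = ‖(exp w - 1 - w) - w * (exp w - 1)‖ := by ring_nf
    _ ≤ ‖exp w - 1 - w‖ + ‖w‖ * ‖exp w - 1‖ := (norm_sub_le _ _).trans_eq (by rw [norm_mul])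
    _ ≤ ‖w‖ ^ 2 + ‖w‖ * (2 * ‖w‖) := by
      gcongr
      exacts [norm_exp_sub_one_sub_id_le hw, norm_exp_sub_one_le hw]
    _ = 3 * ‖w‖ ^ 2 := by ring

theorem one_sub_norm_le_norm_one_sub_conj_mul {a : ℂ} (ha : ‖a‖ ≤ 1) (z : ℂ) :
    1 - ‖z‖ ≤ ‖1 - conj a * z‖ :=
  calc 1 - ‖z‖ ≤ ‖(1 : ℂ)‖ - ‖conj a * z‖ := by
        rw [norm_one, norm_mul, norm_conj]
        nlinarith [norm_nonneg z]
    _ ≤ ‖1 - conj a * z‖ := norm_sub_norm_le _ _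

theorem psifac_eq_one_sub_mul_exp {a z : ℂ} (hD : 1 - conj a * z ≠ 0) :
    psifac a z = (1 - (1 - ‖a‖ ^ 2 : ℝ) / (1 - conj a * z)) *
      exp ((1 - ‖a‖ ^ 2 : ℝ) / (1 - conj a * z)) := by
  have key :
      conj a * ((a - z) / (1 - conj a * z)) = 1 - (1 - ‖a‖ ^ 2 : ℝ) / (1 - conj a * z) := by
    rw [eq_sub_iff_add_eq, ← mul_div_assoc, ← add_div, div_eq_one_iff_eq hD]
    push_cast
    linear_combination mul_conj' a
  rw [psifac, key]
  ring_nf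

theorem norm_psifac_sub_one_le {a z : ℂ} {r : ℝ} (ha : ‖a‖ ≤ 1) (hz : ‖z‖ ≤ r)
    (hr : r < 1) (hsmall : 1 - ‖a‖ ^ 2 ≤ 1 - r) :
    ‖psifac a z - 1‖ ≤ 3 / (1 - r) ^ 2 * (1 - ‖a‖ ^ 2) ^ 2 := by
  have hr' : 0 < 1 - r := by linarith
  have hden : 1 - r ≤ ‖1 - conj a * z‖ :=
    (one_sub_norm_le_norm_one_sub_conj_mul ha z).trans' (by linarith)
  have hD : 1 - conj a * z ≠ 0 := norm_pos_iff.mp (hr'.trans_le hden)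
  have hnum : 0 ≤ 1 - ‖a‖ ^ 2 := by nlinarith [norm_nonneg a]
  set w : ℂ := (1 - ‖a‖ ^ 2 : ℝ) / (1 - conj a * z)
  have hw : ‖w‖ ≤ (1 - ‖a‖ ^ 2) / (1 - r) := by
    rw [norm_div, norm_real, Real.norm_of_nonneg hnum]
    gcongr
  have hw1 : ‖w‖ ≤ 1 := hw.trans ((div_le_one hr').mpr hsmall)
  rw [psifac_eq_one_sub_mul_exp hD]
  calc ‖(1 - w) * exp w - 1‖ ≤ 3 * ‖w‖ ^ 2 := norm_one_sub_mul_exp_sub_one_le hw1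
    _ ≤ 3 * ((1 - ‖a‖ ^ 2) / (1 - r)) ^ 2 := by gcongr
    _ = 3 / (1 - r) ^ 2 * (1 - ‖a‖ ^ 2) ^ 2 := by rw [div_pow]; ring

theorem norm_psifac_zero (a : ℂ) : ‖psifac a 0‖ = ‖a‖ ^ 2 * Real.exp (1 - ‖a‖ ^ 2) := by
  have h : conj a * a = (‖a‖ ^ 2 : ℝ) := by rw [mul_comm, mul_conj']; push_cast; rfl
  simp [psifac, h, norm_exp, -ofReal_pow]

theorem one_sub_conj_mul_ne_zero {a z : ℂ} (ha : ‖a‖ ≤ 1) (hz : ‖z‖ < 1) :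
    1 - conj a * z ≠ 0 :=
  norm_pos_iff.mp ((sub_pos.mpr hz).trans_le (one_sub_norm_le_norm_one_sub_conj_mul ha z))

theorem psifac_ne_zero {a z : ℂ} (ha : ‖a‖ ≤ 1) (hz : ‖z‖ < 1) (ha0 : a ≠ 0) (haz : a ≠ z) :
    psifac a z ≠ 0 :=
  mul_ne_zero (mul_ne_zero ((map_ne_zero _).mpr ha0)
    (div_ne_zero (sub_ne_zero.mpr haz) (one_sub_conj_mul_ne_zero ha hz))) (exp_ne_zero _)

theorem differentiableOn_psifac {a : ℂ} (ha : ‖a‖ ≤ 1) :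
    DifferentiableOn ℂ (psifac a) (ball 0 1) := by
  intro z hz
  have hM : DifferentiableAt ℂ (fun z => conj a * ((a - z) / (1 - conj a * z))) z :=
    (DifferentiableAt.div (c := fun z => a - z) (d := fun z => 1 - conj a * z) (by fun_prop)
      (by fun_prop) (one_sub_conj_mul_ne_zero ha (mem_ball_zero_iff.mp hz))).const_mul _
  exact (hM.mul ((differentiableAt_const 1).sub hM).cexp).differentiableWithinAt

section Product

variable {Z : ℕ → ℂ}

theorem eventually_norm_psifac_sub_one_le (hZ : ∀ n, ‖Z n‖ ≤ 1)
    (hsum : Summable fun n => (1 - ‖Z n‖ ^ 2) ^ 2) {r : ℝ} (hr : r < 1) :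
    ∀ᶠ n in atTop, ∀ z ∈ closedBall (0 : ℂ) r,
      ‖psifac (Z n) z - 1‖ ≤ 3 / (1 - r) ^ 2 * (1 - ‖Z n‖ ^ 2) ^ 2 := by
  have hr' : 0 < 1 - r := by linarith
  filter_upwards [hsum.tendsto_atTop_zero.eventually (ge_mem_nhds (pow_pos hr' 2))] with n hn z hz
  have hnum : 0 ≤ 1 - ‖Z n‖ ^ 2 := by nlinarith [norm_nonneg (Z n), hZ n]
  exact norm_psifac_sub_one_le (hZ n) (mem_closedBall_zero_iff.mp hz) hr
    ((pow_le_pow_iff_left₀ hnum hr'.le two_ne_zero).mp hn)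

theorem hasProdUniformlyOn_psifac (hZ : ∀ n, ‖Z n‖ ≤ 1)
    (hsum : Summable fun n => (1 - ‖Z n‖ ^ 2) ^ 2) {K : Set ℂ} (hK : K ⊆ ball 0 1)
    (hKc : IsCompact K) :
    HasProdUniformlyOn (fun n z => psifac (Z n) z) (fun z => ∏' n, psifac (Z n) z) K := by
  obtain ⟨r, hr, hKr⟩ := exists_lt_subset_ball hKc.isClosed hK
  have hbound := (eventually_norm_psifac_sub_one_le hZ hsum hr).mono
    fun n hn z hz => hn z (ball_subset_closedBall (hKr hz))
  simpa using (hsum.mul_left _).hasProdUniformlyOn_nat_one_add hKc hbound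
    fun n => ((differentiableOn_psifac (hZ n)).continuousOn.mono hK).sub continuousOn_const

theorem differentiableOn_tprod_psifac (hZ : ∀ n, ‖Z n‖ ≤ 1)
    (hsum : Summable fun n => (1 - ‖Z n‖ ^ 2) ^ 2) :
    DifferentiableOn ℂ (fun z => ∏' n, psifac (Z n) z) (ball 0 1) :=
  (hasProdLocallyUniformlyOn_of_forall_compact isOpen_ball
    fun _ hK hKc => hasProdUniformlyOn_psifac hZ hsum hK hKc).differentiableOn
    (.of_forall fun s => by simpa [Finset.prod_fn] using
      DifferentiableOn.finsetProd fun n _ => differentiableOn_psifac (hZ n)) isOpen_ball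

theorem tprod_psifac_eq_zero_iff (hZ : ∀ n, ‖Z n‖ ≤ 1)
    (hsum : Summable fun n => (1 - ‖Z n‖ ^ 2) ^ 2) (hZ0 : ∀ n, Z n ≠ 0) {z : ℂ} (hz : ‖z‖ < 1) :
    ∏' n, psifac (Z n) z = 0 ↔ ∃ n, Z n = z := by
  refine ⟨fun h => ?_, fun ⟨n, hn⟩ => tprod_of_exists_eq_zero ⟨n, by simp [psifac, hn]⟩⟩
  by_contra! hne
  have hsummable : Summable fun n => ‖psifac (Z n) z - 1‖ :=
    .of_norm_bounded_eventually_nat (hsum.mul_left _) <|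
      (eventually_norm_psifac_sub_one_le hZ hsum hz).mono fun n hn => by
        simpa using hn z (mem_closedBall_zero_iff.mpr le_rfl)
  refine tprod_one_add_ne_zero_of_summable (f := fun n => psifac (Z n) z - 1) (fun n => ?_)
    hsummable (by simpa using h)
  simpa using psifac_ne_zero (hZ n) hz (hZ0 n) (hne n)

theorem norm_tprod_psifac_zero (hZ : ∀ n, ‖Z n‖ ≤ 1)
    (hsum : Summable fun n => (1 - ‖Z n‖ ^ 2) ^ 2) :
    ‖∏' n, psifac (Z n) 0‖ = ∏' n, (‖Z n‖ ^ 2 * Real.exp (1 - ‖Z n‖ ^ 2)) := by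
  have hprod := hasProdUniformlyOn_psifac hZ hsum
    (Set.singleton_subset_iff.mpr (mem_ball_self one_pos)) isCompact_singleton
  simpa only [norm_psifac_zero] using (hprod.hasProd rfl).multipliable.norm_tprod

end Product

theorem stmt11 (Z : ℕ → ℂ) (hZ : ∀ n, Z n ∈ ball (0:ℂ) 1)
    (hsum : Summable fun n => (1 - ‖Z n‖ ^ 2) ^ 2)
    (δ : ℝ) (hδ : 0 < δ) (hsep : ∀ n, δ ≤ ‖Z n‖) :
    ∃ F : ℂ → ℂ,
      (∀ K : Set ℂ, K ⊆ ball 0 1 → IsCompact K →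
        TendstoUniformlyOn (fun m z => ∏ n ∈ Finset.range m, psifac (Z n) z) F atTop K)
      ∧ DifferentiableOn ℂ F (ball 0 1)
      ∧ (∀ z ∈ ball (0:ℂ) 1, (F z = 0 ↔ ∃ n, Z n = z))
      ∧ ‖F 0‖
          = ∏' n, (‖Z n‖ ^ 2 * Real.exp (1 - ‖Z n‖ ^ 2))
      ∧ 0 < ‖F 0‖ := by
  have hZ1 (n : ℕ) : ‖Z n‖ ≤ 1 := (mem_ball_zero_iff.mp (hZ n)).le
  have hZ0 (n : ℕ) : Z n ≠ 0 := norm_pos_iff.mp (hδ.trans_le (hsep n))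
  have hzeros (z : ℂ) (hz : z ∈ ball (0 : ℂ) 1) :=
    tprod_psifac_eq_zero_iff hZ1 hsum hZ0 (mem_ball_zero_iff.mp hz)
  refine ⟨fun z => ∏' n, psifac (Z n) z,
    fun K hK hKc => (hasProdUniformlyOn_psifac hZ1 hsum hK hKc).tendstoUniformlyOn_finsetRange,
    differentiableOn_tprod_psifac hZ1 hsum, hzeros, norm_tprod_psifac_zero hZ1 hsum,
    norm_pos_iff.mpr <| mt (hzeros 0 (mem_ball_self one_pos)).mp fun ⟨n, hn⟩ => hZ0 n hn⟩
end
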